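/- arXiv:1803.00963 — 3 statements merged into one kernel-verified Lean document; each statement's English description precedes it below -/
import Mathlib

section
/- Countable serial rule for combinatorial extremal length: let E be a set, let 𝒞 be a family of chains in E, let (E_n)_{n≥1} be pairwise disjoint subsets of E, and for each n let 𝒞_n be a family of chains each of which is contained in E_n. Suppose that every chain S ∈ 𝒞 contains some member of 𝒞_n as a subset, for every n. Then λ(𝒞) ≥ Σ_{n≥1} λ(𝒞_n), i.e. 1/mod 𝒞 ≥ Σ_{n≥1} 1/mod 𝒞_n (with the conventions 1/0 = ∞ and 1/∞ = 0 in [0,∞]). In particular, if Σ_{n≥1} 1/mod 𝒞_n = ∞ then mod 𝒞 = 0. (This is the extremal-length inequality λ(Γ_v) ≥ Σ_n λ(A_n) underlying the proof of Proposition 2.7.) -/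
open scoped ENNReal NNReal

/-- The combinatorial modulus of a family `C` of chains (finite sets of edges) in an edge
set `E`: the infimum of the energies `∑ m(e)²` over all mass distributions `m : E → [0,∞)`
that are admissible for `C`, i.e. `∑_{e ∈ S} m(e) ≥ 1` for every chain `S ∈ C`. -/
noncomputable def combMod {E : Type*} (C : Set (Finset E)) : ℝ≥0∞ :=
  ⨅ (m : E → ℝ≥0) (_ : ∀ S ∈ C, 1 ≤ ∑ e ∈ S, m e), ∑' e : E, ((m e : ℝ≥0∞)) ^ 2

lemma combMod_le_energy {E : Type*} {C : Set (Finset E)} {m : E → ℝ≥0}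
    (h : ∀ S ∈ C, 1 ≤ ∑ e ∈ S, m e) :
    combMod C ≤ ∑' e : E, ((m e : ℝ≥0∞)) ^ 2 :=
  iInf₂_le m h

lemma combMod_le_of_refine {E : Type*} {C C' : Set (Finset E)}
    (h : ∀ S ∈ C, ∃ S' ∈ C', S' ⊆ S) : combMod C ≤ combMod C' := by
  refine le_iInf fun m => le_iInf fun hm => combMod_le_energy fun S hS => ?_
  obtain ⟨S', hS', hss⟩ := h S hS
  exact (hm S' hS').trans (Finset.sum_le_sum_of_subset hss)

lemma exists_admissible_lt {E : Type*} (C : Set (Finset E)) {b : ℝ≥0∞} (hb : combMod C < b) :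
    ∃ m : E → ℝ≥0, (∀ S ∈ C, 1 ≤ ∑ e ∈ S, m e) ∧ ∑' e : E, ((m e : ℝ≥0∞)) ^ 2 < b := by
  rw [combMod] at hb
  obtain ⟨m, hm⟩ := iInf_lt_iff.1 hb
  obtain ⟨h1, h2⟩ := iInf_lt_iff.1 hm
  exact ⟨m, h1, h2⟩

lemma sum_sq_of_mul_eq_zero {ι : Type*} (F : Finset ι) (f : ι → ℝ≥0∞)
    (h : ∀ i ∈ F, ∀ j ∈ F, i ≠ j → f i * f j = 0) :
    (∑ i ∈ F, f i) ^ 2 = ∑ i ∈ F, (f i) ^ 2 := by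
  rw [sq, Finset.sum_mul_sum]
  refine Finset.sum_congr rfl fun i hi => ?_
  rw [Finset.sum_eq_single_of_mem i hi fun j hj hne => h i hi j hj hne.symm, sq]

/-- Countable serial rule for combinatorial extremal length: if `(En)` are pairwise disjoint
subsets of `E`, each chain of `Cn n` lies in `En n`, and every chain of `C` contains a member
of `Cn n` for every `n`, then `λ(C) ≥ ∑' n, λ(Cn n)`, where `λ = 1/mod` is the extremal
length (computed in `[0,∞]`). In particular, if `∑' n, 1/mod (Cn n) = ∞` then `mod C = 0`. -/
theorem extremal_length_serial_rule
    {E : Type*} (C : Set (Finset E))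
    (En : ℕ → Set E) (hdisj : Pairwise (Function.onFun Disjoint En))
    (Cn : ℕ → Set (Finset E))
    (hsub : ∀ n, ∀ S ∈ Cn n, (S : Set E) ⊆ En n)
    (hcontain : ∀ S ∈ C, ∀ n, ∃ S' ∈ Cn n, S' ⊆ S) :
    (∑' n : ℕ, (combMod (Cn n))⁻¹ ≤ (combMod C)⁻¹) ∧
      ((∑' n : ℕ, (combMod (Cn n))⁻¹ = ⊤) → combMod C = 0) := by
  have key : ∀ F : Finset ℕ, ∑ n ∈ F, (combMod (Cn n))⁻¹ ≤ (combMod C)⁻¹ := by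
    intro F
    by_cases hzero : ∃ n ∈ F, combMod (Cn n) = 0
    · obtain ⟨n, _, h0⟩ := hzero
      have hC0 : combMod C = 0 := le_antisymm
        (h0 ▸ combMod_le_of_refine fun S hS => hcontain S hS n) (zero_le')
      rw [hC0]
      simp
    · push_neg at hzero
      set lam : ℕ → ℝ≥0∞ := fun n => (combMod (Cn n))⁻¹ with hlamdef
      by_cases hT0 : ∑ n ∈ F, lam n = 0
      · rw [show ∑ n ∈ F, (combMod (Cn n))⁻¹ = ∑ n ∈ F, lam n from rfl, hT0]
        exact zero_le'
      set T := ∑ n ∈ F, lam n with hTdef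
      have hTtop : T ≠ ⊤ := by
        exact (ENNReal.sum_lt_top.2 fun n hn => ENNReal.inv_lt_top.2 ((hzero n hn).bot_lt)).ne
      suffices hmod : combMod C ≤ T⁻¹ by
        calc T = (T⁻¹)⁻¹ := (inv_inv T).symm
          _ ≤ (combMod C)⁻¹ := ENNReal.inv_le_inv.2 hmod
      refine ENNReal.le_of_forall_pos_le_add fun ε hε _ => ?_
      have hεne : (ε : ℝ≥0∞) ≠ 0 := ENNReal.coe_ne_zero.2 hε.ne'
      -- choose near-optimal admissible masses for each `Cn n` with finite modulus
      have hex : ∀ n, ∃ g : E → ℝ≥0, combMod (Cn n) ≠ ⊤ →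
          (∀ S ∈ Cn n, 1 ≤ ∑ e ∈ S, g e) ∧
            ∑' e : E, ((g e : ℝ≥0∞)) ^ 2 < combMod (Cn n) + ε := by
        intro n
        by_cases h : combMod (Cn n) = ⊤
        · exact ⟨0, fun h' => absurd h h'⟩
        · obtain ⟨g, hg1, hg2⟩ := exists_admissible_lt (Cn n) (ENNReal.lt_add_right h hεne)
          exact ⟨g, fun _ => ⟨hg1, hg2⟩⟩
      choose g hg using hex
      set F' : Finset ℕ := F.filter fun n => combMod (Cn n) ≠ ⊤ with hF'def
      have hmemF' : ∀ n ∈ F', combMod (Cn n) ≠ ⊤ := fun n hn => (Finset.mem_filter.1 hn).2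
      have hmemF : ∀ n ∈ F', n ∈ F := fun n hn => (Finset.mem_filter.1 hn).1
      have hlamne0 : ∀ n ∈ F', lam n ≠ 0 := fun n hn => ENNReal.inv_ne_zero.2 (hmemF' n hn)
      have hlamnetop : ∀ n ∈ F', lam n ≠ ⊤ := fun n hn =>
        ENNReal.inv_ne_top.2 (hzero n (hmemF n hn))
      have hTF' : ∑ n ∈ F', lam n = T := by
        rw [hTdef, hF'def]
        exact Finset.sum_filter_of_ne fun n _ h => ENNReal.inv_ne_zero.1 h
      set c : ℕ → ℝ≥0 := fun n => (lam n * T⁻¹).toNNReal with hcdef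
      have hcoe : ∀ n ∈ F', (c n : ℝ≥0∞) = lam n * T⁻¹ := by
        intro n hn
        exact ENNReal.coe_toNNReal (ENNReal.mul_ne_top (hlamnetop n hn)
          (ENNReal.inv_ne_top.2 hT0))
      have hcsum : ∑ n ∈ F', (c n : ℝ≥0∞) = 1 := by
        rw [Finset.sum_congr rfl hcoe, ← Finset.sum_mul, hTF']
        exact ENNReal.mul_inv_cancel hT0 hTtop
      have hcsum' : ∑ n ∈ F', c n = 1 := by exact_mod_cast hcsum
      set g' : ℕ → E → ℝ≥0 := fun n => (En n).indicator (g n) with hg'def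
      set m : E → ℝ≥0 := fun e => ∑ n ∈ F', c n * g' n e with hmdef
      -- admissibility of m for C
      have hadm : ∀ S ∈ C, 1 ≤ ∑ e ∈ S, m e := by
        intro S hS
        have hswap : ∑ e ∈ S, m e = ∑ n ∈ F', c n * ∑ e ∈ S, g' n e := by
          rw [hmdef]
          rw [Finset.sum_comm]
          exact Finset.sum_congr rfl fun n _ => (Finset.mul_sum _ _ _).symm
        rw [hswap, ← hcsum']
        refine Finset.sum_le_sum fun n hn => ?_
        obtain ⟨S', hS', hss⟩ := hcontain S hS n
        have h1 : (1 : ℝ≥0) ≤ ∑ e ∈ S', g' n e := by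
          have heq : ∑ e ∈ S', g' n e = ∑ e ∈ S', g n e :=
            Finset.sum_congr rfl fun e he =>
              Set.indicator_of_mem (hsub n S' hS' he) _
          rw [heq]
          exact (hg n (hmemF' n hn)).1 S' hS'
        calc c n = c n * 1 := (mul_one _).symm
          _ ≤ c n * ∑ e ∈ S', g' n e := mul_le_mul_right h1 _
          _ ≤ c n * ∑ e ∈ S, g' n e :=
            mul_le_mul_right (Finset.sum_le_sum_of_subset hss) _
      -- energy of m, pointwise
      have hme : ∀ e : E, ((m e : ℝ≥0∞)) ^ 2
          = ∑ n ∈ F', ((c n : ℝ≥0∞) * (g' n e : ℝ≥0∞)) ^ 2 := by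
        intro e
        have hcast : ((m e : ℝ≥0∞)) = ∑ n ∈ F', ((c n : ℝ≥0∞) * (g' n e : ℝ≥0∞)) := by
          rw [hmdef]
          push_cast
          rfl
        rw [hcast, sum_sq_of_mul_eq_zero]
        intro i hi j hj hij
        rcases eq_or_ne (g' i e) 0 with h0 | h0
        · simp [h0]
        · have hei : e ∈ En i := by
            by_contra hne
            exact h0 (Set.indicator_of_notMem hne _)
          have hj0 : g' j e = 0 :=
            Set.indicator_of_notMem (fun hej => Set.disjoint_left.mp (hdisj hij) hei hej) _
          simp [hj0]
      have hen : combMod C ≤ T⁻¹ + ε := by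
        refine (combMod_le_energy hadm).trans ?_
        have hsplit : ∑' e : E, ((m e : ℝ≥0∞)) ^ 2
            = ∑ n ∈ F', ∑' e : E, ((c n : ℝ≥0∞) * (g' n e : ℝ≥0∞)) ^ 2 := by
          simp_rw [hme]
          exact Summable.tsum_finsetSum fun n _ => ENNReal.summable
        rw [hsplit]
        have hterm : ∀ n ∈ F', ∑' e : E, ((c n : ℝ≥0∞) * (g' n e : ℝ≥0∞)) ^ 2
            ≤ (c n : ℝ≥0∞) ^ 2 * (combMod (Cn n) + ε) := by
          intro n hn
          have h1 : ∑' e : E, ((c n : ℝ≥0∞) * (g' n e : ℝ≥0∞)) ^ 2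
              = (c n : ℝ≥0∞) ^ 2 * ∑' e : E, ((g' n e : ℝ≥0∞)) ^ 2 := by
            simp_rw [mul_pow]
            exact ENNReal.tsum_mul_left
          rw [h1]
          refine mul_le_mul_right ?_ _
          have h2 : ∑' e : E, ((g' n e : ℝ≥0∞)) ^ 2 ≤ ∑' e : E, ((g n e : ℝ≥0∞)) ^ 2 :=
            ENNReal.tsum_le_tsum fun e => by
              gcongr
              exact_mod_cast Set.indicator_le_self _ _ e
          exact h2.trans (hg n (hmemF' n hn)).2.le
        calc ∑ n ∈ F', ∑' e : E, ((c n : ℝ≥0∞) * (g' n e : ℝ≥0∞)) ^ 2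
            ≤ ∑ n ∈ F', (c n : ℝ≥0∞) ^ 2 * (combMod (Cn n) + ε) :=
              Finset.sum_le_sum hterm
          _ = ∑ n ∈ F', ((c n : ℝ≥0∞) ^ 2 * combMod (Cn n))
              + ∑ n ∈ F', (c n : ℝ≥0∞) ^ 2 * ε := by
              rw [← Finset.sum_add_distrib]
              exact Finset.sum_congr rfl fun n _ => mul_add _ _ _
          _ ≤ T⁻¹ + ε := by
              refine add_le_add ?_ ?_
              · -- exact value T⁻¹
                have hterm2 : ∀ n ∈ F', (c n : ℝ≥0∞) ^ 2 * combMod (Cn n)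
                    = lam n * (T⁻¹ * T⁻¹) := by
                  intro n hn
                  have hmodn : combMod (Cn n) = (lam n)⁻¹ := (inv_inv _).symm
                  rw [hcoe n hn, hmodn, mul_pow, sq, sq, mul_assoc,
                    mul_comm ((T⁻¹ : ℝ≥0∞) * T⁻¹) (lam n)⁻¹, ← mul_assoc, ← mul_assoc,
                    mul_assoc (lam n) (lam n) (lam n)⁻¹,
                    ENNReal.mul_inv_cancel (hlamne0 n hn) (hlamnetop n hn), mul_one, mul_assoc]
                rw [Finset.sum_congr rfl hterm2, ← Finset.sum_mul, hTF', ← mul_assoc,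
                  ENNReal.mul_inv_cancel hT0 hTtop, one_mul]
              · rw [← Finset.sum_mul]
                refine mul_le_mul_left ?_ _ |>.trans (le_of_eq (one_mul _))
                calc ∑ n ∈ F', ((c n : ℝ≥0∞)) ^ 2 ≤ ∑ n ∈ F', (c n : ℝ≥0∞) := by
                      refine Finset.sum_le_sum fun n hn => ?_
                      have hle1 : (c n : ℝ≥0∞) ≤ 1 := by
                        rw [hcoe n hn]
                        calc lam n * T⁻¹ ≤ T * T⁻¹ :=
                              mul_le_mul_left (Finset.single_le_sum
                                (fun i _ => zero_le (a := lam i)) (hmemF n hn)) _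
                          _ = 1 := ENNReal.mul_inv_cancel hT0 hTtop
                      calc ((c n : ℝ≥0∞)) ^ 2 = (c n : ℝ≥0∞) * (c n : ℝ≥0∞) := sq _
                        _ ≤ (c n : ℝ≥0∞) * 1 := mul_le_mul_right hle1 _
                        _ = (c n : ℝ≥0∞) := mul_one _
                  _ = 1 := hcsum
      exact hen
  constructor
  · rw [ENNReal.tsum_eq_iSup_sum]
    exact iSup_le key
  · intro htop
    have h1 : (⊤ : ℝ≥0∞) ≤ (combMod C)⁻¹ := by
      rw [← htop, ENNReal.tsum_eq_iSup_sum]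
      exact iSup_le key
    exact ENNReal.inv_eq_top.1 (top_le_iff.1 h1)
end

section
/- The function f(z) = cos(π·cos(z)) is a Shabat entire function: (a) every critical value of f lies in {−1, 1}, i.e. for every z ∈ ℂ, if f'(z) = 0 then cos(π·cos(z)) = 1 or cos(π·cos(z)) = −1; and (b) f has no finite asymptotic values, i.e. for every a ∈ ℂ there is no continuous curve γ : [0,∞) → ℂ with |γ(t)| → ∞ and f(γ(t)) → a as t → ∞. -/
open Filter

lemma parta (z : ℂ) (hz : deriv (fun w => Complex.cos (Real.pi * Complex.cos w)) z = 0) :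
    Complex.cos (Real.pi * Complex.cos z) = 1 ∨ Complex.cos (Real.pi * Complex.cos z) = -1 := by
  have h2 : HasDerivAt (fun w => (Real.pi : ℂ) * Complex.cos w) ((Real.pi:ℂ) * -Complex.sin z) z :=
    (Complex.hasDerivAt_cos z).const_mul _
  have h1 : HasDerivAt Complex.cos (-Complex.sin ((Real.pi:ℂ) * Complex.cos z)) ((Real.pi:ℂ) * Complex.cos z) :=
    Complex.hasDerivAt_cos _
  have h3 : HasDerivAt (fun w => Complex.cos ((Real.pi:ℂ) * Complex.cos w)) (-Complex.sin ((Real.pi:ℂ) * Complex.cos z) * ((Real.pi:ℂ) * -Complex.sin z)) z := by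
    have := h1.comp z h2; exact this
  rw [h3.deriv] at hz
  have hpi : (Real.pi : ℂ) ≠ 0 := by
    simpa using Real.pi_ne_zero
  have key : ∀ w : ℂ, Complex.sin w = 0 → Complex.cos w = 1 ∨ Complex.cos w = -1 := by
    intro w hw
    have h : (Complex.cos w - 1) * (Complex.cos w + 1) = 0 := by
      have := Complex.sin_sq_add_cos_sq w
      rw [hw] at this
      ring_nf
      ring_nf at this
      linear_combination this
    rcases mul_eq_zero.1 h with h | h
    · left; linear_combination h
    · right; linear_combination h
  rcases mul_eq_zero.1 hz with h | h
  · have : Complex.sin ((Real.pi:ℂ) * Complex.cos z) = 0 := by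
      have := neg_eq_zero.1 h
      exact this
    exact key _ this
  · have hs : Complex.sin z = 0 := by
      rcases mul_eq_zero.1 h with h' | h'
      · exact absurd h' hpi
      · exact neg_eq_zero.1 h'
    rcases key z hs with h' | h'
    · right; rw [h', mul_one, ← Complex.ofReal_cos, Real.cos_pi]; norm_num
    · right; rw [h', mul_neg_one, ← Complex.cos_neg, neg_neg, ← Complex.ofReal_cos, Real.cos_pi]
      norm_num

lemma cosre' (z : ℂ) : (Complex.cos z).re = Real.cos z.re * Real.cosh z.im := by
  rw [Complex.cos_eq]
  simp [← Complex.ofReal_cos, ← Complex.ofReal_sin, ← Complex.ofReal_cosh, ← Complex.ofReal_sinh]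

lemma cosim' (z : ℂ) : (Complex.cos z).im = -(Real.sin z.re * Real.sinh z.im) := by
  rw [Complex.cos_eq]
  simp [← Complex.ofReal_cos, ← Complex.ofReal_sin, ← Complex.ofReal_cosh, ← Complex.ofReal_sinh]

lemma abs_sinh_le_abs_cos (z : ℂ) : |Real.sinh z.im| ≤ ‖Complex.cos z‖ := by
  have h1 : (‖Complex.cos z‖)^2 = (Real.cos z.re * Real.cosh z.im)^2
      + (Real.sin z.re * Real.sinh z.im)^2 := by
    rw [Complex.sq_norm, Complex.normSq_apply, cosre', cosim']; ring
  have h2 : Real.sin z.re ^2 + Real.cos z.re ^2 = 1 := Real.sin_sq_add_cos_sq _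
  have h3 : Real.cosh z.im ^ 2 = 1 + Real.sinh z.im ^2 := Real.cosh_sq' _
  have h4 : (0:ℝ) ≤ ‖Complex.cos z‖ := norm_nonneg _
  have h5 : |Real.sinh z.im| ^ 2 = Real.sinh z.im ^ 2 := sq_abs _
  nlinarith [abs_nonneg (Real.sinh z.im)]

lemma trap {g : ℝ → ℝ} {T p q : ℝ} (hg : ContinuousOn g (Set.Ici T))
    (hp : ∀ t, T ≤ t → g t ≠ p) (hq : ∀ t, T ≤ t → g t ≠ q)
    (h0 : p < g T) (h1 : g T < q) : ∀ t, T ≤ t → p < g t ∧ g t < q := by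
  intro t ht
  have hsub : Set.uIcc T t ⊆ Set.Ici T := by
    rw [Set.uIcc_of_le ht]; exact Set.Icc_subset_Ici_self
  have hIVT := intermediate_value_uIcc (hg.mono hsub)
  constructor
  · by_contra hc
    push_neg at hc
    have : p ∈ Set.uIcc (g T) (g t) := Set.mem_uIcc_of_ge hc h0.le
    obtain ⟨s, hs, hgs⟩ := hIVT this
    rw [Set.uIcc_of_le ht] at hs
    exact hp s hs.1 hgs
  · by_contra hc
    push_neg at hc
    have : q ∈ Set.uIcc (g T) (g t) := Set.mem_uIcc_of_le h1.le hc
    obtain ⟨s, hs, hgs⟩ := hIVT this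
    rw [Set.uIcc_of_le ht] at hs
    exact hq s hs.1 hgs

lemma coshalf (k : ℤ) : Real.cos (((k:ℝ) - 1/2) * Real.pi) = 0 := by
  have h : ((k:ℝ) - 1/2) * Real.pi = (k:ℝ) * Real.pi - Real.pi/2 := by ring
  rw [h, Real.cos_sub, Real.cos_pi_div_two, Real.sin_pi_div_two, Real.sin_int_mul_pi]
  ring

lemma abs_sinh_le_cosh (v : ℝ) : |Real.sinh v| ≤ Real.cosh v := by
  rw [Real.abs_sinh, ← Real.cosh_abs]
  exact (Real.sinh_lt_cosh _).le

set_option maxHeartbeats 2000000 in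
theorem partb (a : ℂ) : ¬ ∃ γ : ℝ → ℂ, ContinuousOn γ (Set.Ici 0) ∧
    Tendsto (fun t => ‖γ t‖) atTop atTop ∧
    Tendsto (fun t => Complex.cos (Real.pi * Complex.cos (γ t))) atTop (nhds a) := by
  rintro ⟨γ, hc, habs, hlim⟩
  have pipos := Real.pi_pos
  set x : ℝ → ℝ := fun t => (γ t).re with hxdef
  set y : ℝ → ℝ := fun t => (γ t).im with hydef
  set h : ℝ → ℝ := fun t => Real.cos (x t) * Real.cosh (y t) with hhdef
  have hxc : ContinuousOn x (Set.Ici 0) := Complex.continuous_re.comp_continuousOn hc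
  have hyc : ContinuousOn y (Set.Ici 0) := Complex.continuous_im.comp_continuousOn hc
  have hhc : ContinuousOn h (Set.Ici 0) :=
    (Real.continuous_cos.comp_continuousOn hxc).mul (Real.continuous_cosh.comp_continuousOn hyc)
  set F : ℝ → ℂ := fun t => Complex.cos ((Real.pi : ℂ) * Complex.cos (γ t)) with hFdef
  have hwre : ∀ t, ((Real.pi : ℂ) * Complex.cos (γ t)).re = Real.pi * h t := by
    intro t
    rw [Complex.re_ofReal_mul, cosre']
  have hwim : ∀ t, ((Real.pi : ℂ) * Complex.cos (γ t)).im
      = -(Real.pi * (Real.sin (x t) * Real.sinh (y t))) := by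
    intro t
    rw [Complex.im_ofReal_mul, cosim']; ring
  -- boundedness of the imaginary part of π cos γ
  set C := Real.arsinh (‖a‖ + 1) with hCdef
  have habsF : Tendsto (fun t => ‖F t‖) atTop (nhds (‖a‖)) :=
    (continuous_norm.tendsto a).comp hlim
  have hev : ∀ᶠ t in atTop, ‖F t‖ ≤ ‖a‖ + 1 :=
    habsF.eventually (eventually_le_nhds (lt_add_one _))
  obtain ⟨T0, hT0⟩ := eventually_atTop.1 hev
  set C2 := C / Real.pi with hC2def
  have hCnonneg : 0 ≤ C := Real.arsinh_nonneg_iff.2 (by positivity)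
  have hC2nonneg : 0 ≤ C2 := div_nonneg hCnonneg pipos.le
  have him : ∀ t, T0 ≤ t → |Real.sin (x t) * Real.sinh (y t)| ≤ C2 := by
    intro t ht
    have h1 : |Real.sinh (((Real.pi : ℂ) * Complex.cos (γ t)).im)| ≤ ‖a‖ + 1 :=
      le_trans (abs_sinh_le_abs_cos _) (hT0 t ht)
    rw [Real.abs_sinh] at h1
    have h2 : |((Real.pi : ℂ) * Complex.cos (γ t)).im| ≤ C := by
      have h3 : Real.sinh |((Real.pi : ℂ) * Complex.cos (γ t)).im| ≤ Real.sinh C := by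
        rw [hCdef, Real.sinh_arsinh]; exact h1
      exact Real.sinh_le_sinh.1 h3
    rw [hwim, abs_neg, abs_mul, abs_of_pos pipos] at h2
    rw [hC2def, le_div_iff₀ pipos]
    linarith
  by_cases hP : ∀ T : ℝ, ∃ t, T ≤ t ∧ 0 ≤ t ∧ ∃ n : ℤ, h t = 2*(n:ℝ)
  · by_cases hQ : ∀ T : ℝ, ∃ t, T ≤ t ∧ 0 ≤ t ∧ ∃ n : ℤ, h t = 2*(n:ℝ)+1
    · -- both even and odd integer values are hit arbitrarily late
      have hA : (1:ℝ) ≤ a.re := by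
        have hfreq : ∃ᶠ t in atTop, F t ∈ {z : ℂ | 1 ≤ z.re} := by
          rw [frequently_atTop]
          intro T
          obtain ⟨t, ht, _, n, hn⟩ := hP T
          refine ⟨t, ht, ?_⟩
          show 1 ≤ (F t).re
          rw [hFdef]
          rw [cosre', hwre, hn]
          have he : Real.pi * (2*(n:ℝ)) = (n:ℝ) * (2*Real.pi) := by ring
          rw [he, Real.cos_int_mul_two_pi, one_mul]
          exact Real.one_le_cosh _
        have hcl : IsClosed {z : ℂ | 1 ≤ z.re} :=
          isClosed_le continuous_const Complex.continuous_re
        have hmem := mem_closure_of_frequently_of_tendsto hfreq hlim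
        rwa [hcl.closure_eq] at hmem
      have hB : a.re ≤ -1 := by
        have hfreq : ∃ᶠ t in atTop, F t ∈ {z : ℂ | z.re ≤ -1} := by
          rw [frequently_atTop]
          intro T
          obtain ⟨t, ht, _, n, hn⟩ := hQ T
          refine ⟨t, ht, ?_⟩
          show (F t).re ≤ -1
          rw [hFdef]
          rw [cosre', hwre, hn]
          have he : Real.pi * (2*(n:ℝ)+1) = (n:ℝ) * (2*Real.pi) + Real.pi := by ring
          rw [he, Real.cos_int_mul_two_pi_add_pi]
          have := Real.one_le_cosh (((Real.pi : ℂ) * Complex.cos (γ t)).im)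
          nlinarith
        have hcl : IsClosed {z : ℂ | z.re ≤ -1} :=
          isClosed_le Complex.continuous_re continuous_const
        have hmem := mem_closure_of_frequently_of_tendsto hfreq hlim
        rwa [hcl.closure_eq] at hmem
      linarith
    · -- odd values eventually avoided
      push_neg at hQ
      obtain ⟨T, hT⟩ := hQ
      set T1 := max T 0 with hT1def
      have hT1nonneg : (0:ℝ) ≤ T1 := le_max_right _ _
      have hT1 : ∀ t, T1 ≤ t → ∀ n : ℤ, h t ≠ 2*(n:ℝ)+1 := by
        intro t ht n hn
        exact (hT t (le_trans (le_max_left _ _) ht) (le_trans (le_max_right _ _) ht) n) hn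
      have hIciT1 : Set.Ici T1 ⊆ Set.Ici 0 := Set.Ici_subset_Ici.2 hT1nonneg
      -- trap h between consecutive odd integers
      set k := ⌊(h T1 + 1) / 2⌋ with hkdef
      have hk1 : 2*(k:ℝ) - 1 < h T1 := by
        have hle : (k:ℝ) ≤ (h T1 + 1) / 2 := Int.floor_le _
        have h' : 2*(k:ℝ) - 1 ≤ h T1 := by linarith
        rcases h'.lt_or_eq with hlt | heq
        · exact hlt
        · exact absurd (by push_cast; linarith : h T1 = 2*(((k-1):ℤ):ℝ)+1) (hT1 T1 le_rfl (k-1))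
      have hk2 : h T1 < 2*(k:ℝ) + 1 := by
        have := Int.lt_floor_add_one ((h T1 + 1) / 2); linarith
      have htrap := trap (hhc.mono hIciT1)
        (fun t ht hcon => hT1 t ht (k-1) (by push_cast; push_cast at hcon; linarith))
        (fun t ht hcon => hT1 t ht k (by push_cast; push_cast at hcon; linarith)) hk1 hk2
      obtain ⟨B, hBpos, hBbound⟩ : ∃ B : ℝ, 0 ≤ B ∧ ∀ t, T1 ≤ t → |h t| ≤ B := by
        refine ⟨2*|(k:ℝ)| + 1, by positivity, ?_⟩
        intro t ht
        obtain ⟨hl, hr⟩ := htrap t ht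
        rw [abs_le]
        constructor
        · have := neg_abs_le (k:ℝ); linarith
        · have := le_abs_self (k:ℝ); linarith
      set T2 := max T0 T1 with hT2def
      have hT2nonneg : (0:ℝ) ≤ T2 := le_trans hT1nonneg (le_max_right T0 T1)
      -- y is bounded after T2
      obtain ⟨D, hDbound⟩ : ∃ D : ℝ, ∀ t, T2 ≤ t → |y t| ≤ D := by
        refine ⟨B + C2 + 1, ?_⟩
        intro t ht
        have hh := hBbound t (le_trans (le_max_right T0 T1) ht)
        have hs := him t (le_trans (le_max_left T0 T1) ht)
        have hht : h t = Real.cos (x t) * Real.cosh (y t) := rfl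
        have hpyth := Real.sin_sq_add_cos_sq (x t)
        have hcq := Real.cosh_sq' (y t)
        have hh2 : (Real.cos (x t) * Real.cosh (y t))^2 ≤ B^2 := by
          rw [← hht]
          nlinarith [sq_abs (h t), abs_nonneg (h t)]
        have hs2 : (Real.sin (x t) * Real.sinh (y t))^2 ≤ C2^2 := by
          nlinarith [sq_abs (Real.sin (x t) * Real.sinh (y t)),
            abs_nonneg (Real.sin (x t) * Real.sinh (y t))]
        have h1 : (Real.sinh (y t))^2 ≤ B^2 + C2^2 := by nlinarith
        have h2 : |Real.sinh (y t)| ≤ B + C2 + 1 := by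
          nlinarith [sq_abs (Real.sinh (y t)), abs_nonneg (Real.sinh (y t))]
        have h3 : |y t| ≤ |Real.sinh (y t)| := by
          rw [Real.abs_sinh]
          exact Real.self_le_sinh_iff.2 (abs_nonneg _)
        linarith
      -- |x| tends to infinity
      have hxinf : Tendsto (fun t => |x t|) atTop atTop := by
        apply tendsto_atTop_mono' atTop ?_ (tendsto_atTop_add_const_right atTop (-D) habs)
        filter_upwards [eventually_ge_atTop T2] with t ht
        have h1 := Complex.norm_le_abs_re_add_abs_im (γ t)
        have h2 := hDbound t ht
        show ‖γ t‖ + -D ≤ |x t|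
        linarith
      -- find a late time with |x| much larger than |x T2|
      obtain ⟨t2, ht2M, ht2ge⟩ :=
        ((hxinf.eventually_ge_atTop (|x T2| + 9)).and (eventually_ge_atTop T2)).exists
      have hgap : 9 ≤ |x t2 - x T2| := by
        have := abs_sub_abs_le_abs_sub (x t2) (x T2); linarith
      have hsub : Set.uIcc T2 t2 ⊆ Set.Ici 0 := by
        rw [Set.uIcc_of_le ht2ge]; exact fun s hs => le_trans hT2nonneg hs.1
      have hIVT := intermediate_value_uIcc (hxc.mono hsub)
      have hmain : ∀ v : ℝ, x T2 ⊓ x t2 ≤ v → v ≤ x T2 ⊔ x t2 → ∃ s, T2 ≤ s ∧ x s = v := by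
        intro v h1 h2
        obtain ⟨s, hs, hxs⟩ := hIVT (⟨h1, h2⟩ : v ∈ Set.uIcc (x T2) (x t2))
        rw [Set.uIcc_of_le ht2ge] at hs
        exact ⟨s, hs.1, hxs⟩
      have hcd : 9 ≤ (x T2 ⊔ x t2) - (x T2 ⊓ x t2) := by
        rw [max_sub_min_eq_abs]; exact hgap
      have h2pi : 2 * Real.pi ≤ 8 := by linarith [Real.pi_le_four]
      have h2pipos : (0:ℝ) < 2*Real.pi := by linarith
      -- an even multiple of π in the range of x
      obtain ⟨s1, hs1ge, hs1⟩ : ∃ s, T2 ≤ s ∧ x s = (⌈(x T2 ⊓ x t2) / (2*Real.pi)⌉ : ℝ) * (2*Real.pi) := by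
        apply hmain
        · have hle := Int.le_ceil ((x T2 ⊓ x t2) / (2*Real.pi))
          have hm := mul_le_mul_of_nonneg_right hle h2pipos.le
          rwa [div_mul_cancel₀ _ h2pipos.ne'] at hm
        · have hlt := Int.ceil_lt_add_one ((x T2 ⊓ x t2) / (2*Real.pi))
          have heq : ((x T2 ⊓ x t2) / (2*Real.pi) + 1) * (2*Real.pi)
              = (x T2 ⊓ x t2) + 2*Real.pi := by
            rw [add_mul, div_mul_cancel₀ _ h2pipos.ne', one_mul]
          have hm := mul_lt_mul_of_pos_right hlt h2pipos
          rw [heq] at hm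
          linarith
      have hhs1 : 1 ≤ h s1 := by
        have hht : h s1 = Real.cos (x s1) * Real.cosh (y s1) := rfl
        rw [hht, hs1, Real.cos_int_mul_two_pi, one_mul]
        exact Real.one_le_cosh _
      -- an odd multiple of π in the range of x
      obtain ⟨s2, hs2ge, hs2⟩ : ∃ s, T2 ≤ s ∧
          x s = (⌈((x T2 ⊓ x t2) - Real.pi) / (2*Real.pi)⌉ : ℝ) * (2*Real.pi) + Real.pi := by
        apply hmain
        · have hle := Int.le_ceil (((x T2 ⊓ x t2) - Real.pi) / (2*Real.pi))
          have hm := mul_le_mul_of_nonneg_right hle h2pipos.le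
          rw [div_mul_cancel₀ _ h2pipos.ne'] at hm
          linarith
        · have hlt := Int.ceil_lt_add_one (((x T2 ⊓ x t2) - Real.pi) / (2*Real.pi))
          have heq : (((x T2 ⊓ x t2) - Real.pi) / (2*Real.pi) + 1) * (2*Real.pi)
              = (x T2 ⊓ x t2) - Real.pi + 2*Real.pi := by
            rw [add_mul, div_mul_cancel₀ _ h2pipos.ne', one_mul]
          have hm := mul_lt_mul_of_pos_right hlt h2pipos
          rw [heq] at hm
          linarith
      have hhs2 : h s2 ≤ -1 := by
        have hht : h s2 = Real.cos (x s2) * Real.cosh (y s2) := rfl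
        rw [hht, hs2, Real.cos_int_mul_two_pi_add_pi]
        have := Real.one_le_cosh (y s2); nlinarith
      -- h must take the odd value 1 somewhere late: contradiction
      have hs1T1 : T1 ≤ s1 := le_trans (le_max_right T0 T1) hs1ge
      have hs2T1 : T1 ≤ s2 := le_trans (le_max_right T0 T1) hs2ge
      have hsub2 : Set.uIcc s1 s2 ⊆ Set.Ici 0 := fun s hs =>
        le_trans (le_trans hT1nonneg (le_inf hs1T1 hs2T1)) hs.1
      have hIVT2 := intermediate_value_uIcc (hhc.mono hsub2)
      have hmem1 : (1:ℝ) ∈ Set.uIcc (h s1) (h s2) :=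
        Set.mem_uIcc_of_ge (by linarith) (by linarith)
      obtain ⟨s, hsmem, hsval⟩ := hIVT2 hmem1
      have hsT1 : T1 ≤ s := le_trans (le_trans (le_inf hs1T1 hs2T1) hsmem.1) le_rfl
      exact hT1 s hsT1 0 (by push_cast; linarith)
  · -- even values eventually avoided
    push_neg at hP
    obtain ⟨T, hT⟩ := hP
    set T1 := max T 0 with hT1def
    have hT1nonneg : (0:ℝ) ≤ T1 := le_max_right _ _
    have hT1 : ∀ t, T1 ≤ t → ∀ n : ℤ, h t ≠ 2*(n:ℝ) := by
      intro t ht n hn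
      exact (hT t (le_trans (le_max_left _ _) ht) (le_trans (le_max_right _ _) ht) n) hn
    have hIciT1 : Set.Ici T1 ⊆ Set.Ici 0 := Set.Ici_subset_Ici.2 hT1nonneg
    -- trap h between consecutive even integers
    set k := ⌊h T1 / 2⌋ with hkdef
    have hk1 : 2*(k:ℝ) < h T1 := by
      have hle : (k:ℝ) ≤ h T1 / 2 := Int.floor_le _
      rcases hle.lt_or_eq with hlt | heq
      · linarith
      · exact absurd (by linarith : h T1 = 2*(k:ℝ)) (hT1 T1 le_rfl k)
    have hk2 : h T1 < 2*(k:ℝ) + 2 := by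
      have := Int.lt_floor_add_one (h T1 / 2); linarith
    have htrap := trap (hhc.mono hIciT1) (fun t ht => hT1 t ht k)
      (fun t ht hcon => hT1 t ht (k+1) (by push_cast; push_cast at hcon; linarith)) hk1 hk2
    obtain ⟨B, hBpos, hBbound⟩ : ∃ B : ℝ, 0 ≤ B ∧ ∀ t, T1 ≤ t → |h t| ≤ B := by
      refine ⟨2*|(k:ℝ)| + 2, by positivity, ?_⟩
      intro t ht
      obtain ⟨hl, hr⟩ := htrap t ht
      rw [abs_le]
      constructor
      · have := neg_abs_le (k:ℝ); linarith
      · have := le_abs_self (k:ℝ); linarith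
    -- cos (x t) never vanishes after T1
    have hcosne : ∀ t, T1 ≤ t → Real.cos (x t) ≠ 0 := by
      intro t ht hc0
      exact hT1 t ht 0 (by rw [hhdef]; simp [hc0])
    -- trap x between consecutive zeros of cos
    set k2 := ⌊x T1 / Real.pi + 1/2⌋ with hk2def
    have hx1 : ((k2:ℝ) - 1/2) * Real.pi < x T1 := by
      have hle : (k2:ℝ) ≤ x T1 / Real.pi + 1/2 := Int.floor_le _
      have h' : ((k2:ℝ) - 1/2) * Real.pi ≤ x T1 := by
        have hm := mul_le_mul_of_nonneg_right (by linarith : (k2:ℝ) - 1/2 ≤ x T1 / Real.pi) pipos.le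
        rwa [div_mul_cancel₀ _ pipos.ne'] at hm
      rcases h'.lt_or_eq with hlt | heq
      · exact hlt
      · exact absurd (by rw [← heq, coshalf]) (hcosne T1 le_rfl)
    have hx2 : x T1 < ((k2:ℝ) + 1/2) * Real.pi := by
      have hlt := Int.lt_floor_add_one (x T1 / Real.pi + 1/2)
      have h' : x T1 / Real.pi < (k2:ℝ) + 1/2 := by linarith
      have hm := mul_lt_mul_of_pos_right h' pipos
      rwa [div_mul_cancel₀ _ pipos.ne'] at hm
    have hxtrap := trap (hxc.mono hIciT1)
      (fun t ht hcon => hcosne t ht (by rw [hcon, coshalf]))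
      (fun t ht hcon => hcosne t ht (by
        have he : ((k2:ℝ) + 1/2) * Real.pi = ((((k2+1):ℤ):ℝ) - 1/2) * Real.pi := by
          push_cast; ring
        rw [hcon, he, coshalf])) hx1 hx2
    obtain ⟨X, hXbound⟩ : ∃ X : ℝ, ∀ t, T1 ≤ t → |x t| ≤ X := by
      refine ⟨|((k2:ℝ) - 1/2) * Real.pi| + |((k2:ℝ) + 1/2) * Real.pi|, ?_⟩
      intro t ht
      obtain ⟨hl, hr⟩ := hxtrap t ht
      rw [abs_le]
      constructor
      · have h1 := neg_abs_le (((k2:ℝ) - 1/2) * Real.pi)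
        have h2 := abs_nonneg (((k2:ℝ) + 1/2) * Real.pi)
        linarith
      · have h1 := le_abs_self (((k2:ℝ) + 1/2) * Real.pi)
        have h2 := abs_nonneg (((k2:ℝ) - 1/2) * Real.pi)
        linarith
    -- |y| tends to infinity
    have hyinf : Tendsto (fun t => |y t|) atTop atTop := by
      apply tendsto_atTop_mono' atTop ?_ (tendsto_atTop_add_const_right atTop (-X) habs)
      filter_upwards [eventually_ge_atTop T1] with t ht
      have h1 := Complex.norm_le_abs_re_add_abs_im (γ t)
      have h2 := hXbound t ht
      show ‖γ t‖ + -X ≤ |y t|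
      linarith
    -- pick a late time with |sinh y| huge
    obtain ⟨t, htM, ht0, ht1⟩ :=
      ((hyinf.eventually_ge_atTop (2*C2 + 2*B + 2)).and
        ((eventually_ge_atTop T0).and (eventually_ge_atTop T1))).exists
    have hsinh : 2*C2 + 2*B + 2 ≤ |Real.sinh (y t)| := by
      rw [Real.abs_sinh]
      exact le_trans htM (Real.self_le_sinh_iff.2 (abs_nonneg _))
    have hsin := him t ht0
    rw [abs_mul] at hsin
    have hB' := hBbound t ht1
    have hsin2 : |Real.sin (x t)| ≤ 1/2 := by
      have hmm := mul_le_mul_of_nonneg_left hsinh (abs_nonneg (Real.sin (x t)))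
      nlinarith [abs_nonneg (Real.sin (x t))]
    have hcos2 : 1/2 ≤ |Real.cos (x t)| := by
      have hpyth := Real.sin_sq_add_cos_sq (x t)
      have hs2 : Real.sin (x t)^2 ≤ 1/4 := by
        nlinarith [sq_abs (Real.sin (x t)), abs_nonneg (Real.sin (x t))]
      by_contra hcon
      push_neg at hcon
      nlinarith [sq_abs (Real.cos (x t)), abs_nonneg (Real.cos (x t))]
    have hcosh := abs_sinh_le_cosh (y t)
    have hht : h t = Real.cos (x t) * Real.cosh (y t) := rfl
    have habsh : |h t| = |Real.cos (x t)| * Real.cosh (y t) := by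
      rw [hht, abs_mul, abs_of_pos (Real.cosh_pos _)]
    have hge : (1/2) * Real.cosh (y t) ≤ |Real.cos (x t)| * Real.cosh (y t) :=
      mul_le_mul_of_nonneg_right hcos2 (Real.cosh_pos _).le
    linarith

/-- The function `f(z) = cos (π cos z)` is a Shabat entire function: all of its critical
values lie in `{-1, 1}`, and it has no finite asymptotic values. -/
theorem cos_pi_cos_is_shabat :
    (∀ z : ℂ, deriv (fun w => Complex.cos (Real.pi * Complex.cos w)) z = 0 →
      Complex.cos (Real.pi * Complex.cos z) = 1 ∨
        Complex.cos (Real.pi * Complex.cos z) = -1) ∧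
    (∀ a : ℂ, ¬ ∃ γ : ℝ → ℂ, ContinuousOn γ (Set.Ici 0) ∧
      Tendsto (fun t => ‖γ t‖) atTop atTop ∧
      Tendsto (fun t => Complex.cos (Real.pi * Complex.cos (γ t))) atTop (nhds a)) := by
  exact ⟨parta, partb⟩
end

section
/- If f : ℂ → ℂ is a nonconstant polynomial all of whose critical values lie in {−1, 1} (i.e. f'(z) = 0 implies f(z) = 1 or f(z) = −1), then the set T_f = f⁻¹([−1,1]) = { z ∈ ℂ : f(z) is real and −1 ≤ f(z) ≤ 1 } is compact and connected, and its complement ℂ \ T_f is connected. (This expresses the paper's Observation, part (1): for a Shabat polynomial, T_f is a finite tree, hence a compact connected set that does not separate the plane.) -/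
open Metric Set Polynomial Filter Bornology Topology

namespace ShabatTree

/-! ### The segment `[-1,1] ⊆ ℂ` -/

def seg : Set ℂ := {w : ℂ | w.im = 0 ∧ -1 ≤ w.re ∧ w.re ≤ 1}

lemma zero_mem_seg : (0 : ℂ) ∈ seg := by simp [seg]

lemma one_mem_seg : (1 : ℂ) ∈ seg := by simp [seg]

lemma neg_one_mem_seg : (-1 : ℂ) ∈ seg := by simp [seg]

lemma seg_nonempty : seg.Nonempty := ⟨0, zero_mem_seg⟩

lemma isClosed_seg : IsClosed seg := by
  have h1 : IsClosed {w : ℂ | w.im = 0} := isClosed_eq Complex.continuous_im continuous_const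
  have h2 : IsClosed {w : ℂ | -1 ≤ w.re} := isClosed_le continuous_const Complex.continuous_re
  have h3 : IsClosed {w : ℂ | w.re ≤ 1} := isClosed_le Complex.continuous_re continuous_const
  exact h1.inter (h2.inter h3)

lemma convex_seg : Convex ℝ seg := by
  intro x hx y hy a b ha hb hab
  obtain ⟨hx1, hx2, hx3⟩ := hx
  obtain ⟨hy1, hy2, hy3⟩ := hy
  constructor
  · simp only [Complex.add_im, Complex.real_smul, Complex.mul_im, Complex.ofReal_im,
      Complex.ofReal_re]
    rw [hx1, hy1]; ring
  constructor
  · have : (a • x + b • y).re = a * x.re + b * y.re := by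
      simp [Complex.add_re, Complex.real_smul, Complex.mul_re]
    rw [this]
    nlinarith
  · have : (a • x + b • y).re = a * x.re + b * y.re := by
      simp [Complex.add_re, Complex.real_smul, Complex.mul_re]
    rw [this]
    nlinarith

lemma norm_le_one_of_mem_seg {w : ℂ} (hw : w ∈ seg) : ‖w‖ ≤ 1 := by
  obtain ⟨h1, h2, h3⟩ := hw
  have : ‖w‖ = |w.re| := by
    rw [Complex.norm_def, Complex.normSq_apply, h1]
    simp [Real.sqrt_mul_self_eq_abs]
  rw [show ‖w‖ = ‖w‖ from rfl, this]
  rw [abs_le]; exact ⟨h2, h3⟩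

lemma isCompact_seg : IsCompact seg :=
  (isCompact_closedBall (0:ℂ) 1).of_isClosed_subset isClosed_seg
    (fun w hw => by simpa [mem_closedBall_zero_iff] using norm_le_one_of_mem_seg hw)

/-! ### The distance function and its sublevel sets -/

variable (P : Polynomial ℂ)

/-- distance of `P z` to the segment. -/
noncomputable def u (z : ℂ) : ℝ := infDist (P.eval z) seg

lemma continuous_u : Continuous (u P) :=
  (continuous_infDist_pt seg).comp P.continuous

lemma u_nonneg (z : ℂ) : 0 ≤ u P z := infDist_nonneg

lemma u_eq_zero_iff {z : ℂ} : u P z = 0 ↔ P.eval z ∈ seg := by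
  rw [u, ← IsClosed.mem_iff_infDist_zero isClosed_seg seg_nonempty]

/-- sublevel sets -/
def X (s : ℝ) : Set ℂ := {z | u P z ≤ s}
def G (s : ℝ) : Set ℂ := {z | u P z < s}

lemma isClosed_X (s : ℝ) : IsClosed (X P s) := isClosed_le (continuous_u P) continuous_const
lemma isOpen_G (s : ℝ) : IsOpen (G P s) := isOpen_lt (continuous_u P) continuous_const
lemma G_subset_X (s : ℝ) : G P s ⊆ X P s := fun z (h : u P z < s) => le_of_lt h

lemma X_mono {s s' : ℝ} (h : s ≤ s') : X P s ⊆ X P s' :=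
  fun z (hz : u P z ≤ s) => le_trans hz h

lemma mem_X_of_le {s : ℝ} {z : ℂ} (h : u P z = 0) (hs : 0 ≤ s) : z ∈ X P s := by
  show u P z ≤ s; rw [h]; exact hs

lemma norm_eval_le_of_mem_X {s : ℝ} {z : ℂ} (hz : z ∈ X P s) : ‖P.eval z‖ ≤ s + 1 := by
  obtain ⟨p, hp, hd⟩ := isCompact_seg.exists_infDist_eq_dist seg_nonempty (P.eval z)
  have h1 : ‖P.eval z - p‖ = u P z := by rw [u, hd, dist_eq_norm]
  calc ‖P.eval z‖ ≤ ‖P.eval z - p‖ + ‖p‖ := by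
        simpa using norm_add_le (P.eval z - p) p
  _ ≤ s + 1 := add_le_add (h1 ▸ hz) (norm_le_one_of_mem_seg hp)

lemma isBounded_norm_le (hP : 0 < P.natDegree) (c : ℝ) :
    IsBounded {z : ℂ | ‖P.eval z‖ ≤ c} := by
  have hdeg : 0 < P.degree := natDegree_pos_iff_degree_pos.mp hP
  have htend : Tendsto (fun z : ℂ => ‖P.eval z‖) (cocompact ℂ) atTop :=
    P.tendsto_norm_atTop hdeg tendsto_norm_cocompact_atTop
  have hev : ∀ᶠ z : ℂ in cocompact ℂ, c < ‖P.eval z‖ := htend.eventually_gt_atTop c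
  obtain ⟨K, hK, hKs⟩ := mem_cocompact.mp hev
  refine hK.isBounded.subset fun z hz => ?_
  by_contra hzK
  have : c < ‖P.eval z‖ := hKs hzK
  exact absurd hz (not_le.mpr this)

lemma isCompact_X (hP : 0 < P.natDegree) (s : ℝ) : IsCompact (X P s) := by
  rw [isCompact_iff_isClosed_bounded]
  exact ⟨isClosed_X P s, (isBounded_norm_le P hP (s+1)).subset
    (fun z hz => norm_eval_le_of_mem_X P hz)⟩

end ShabatTree

namespace ShabatTree

/-! ### General topology helpers -/

lemma isCompact_connectedComponentIn {F : Set ℂ} (hF : IsCompact F) {x : ℂ} :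
    IsCompact (connectedComponentIn F x) := by
  rw [connectedComponentIn]
  split_ifs with h
  · have : CompactSpace F := isCompact_iff_compactSpace.mp hF
    exact (isClosed_connectedComponent.isCompact).image continuous_subtype_val
  · exact isCompact_empty

/-- Cantor: the intersection of a decreasing sequence of nonempty compact preconnected
sets is preconnected. -/
lemma isPreconnected_iInter_of_sequence {C : ℕ → Set ℂ}
    (hcpt : ∀ n, IsCompact (C n)) (hne : ∀ n, (C n).Nonempty)
    (hconn : ∀ n, IsPreconnected (C n)) (hmono : ∀ n, C (n+1) ⊆ C n) :
    IsPreconnected (⋂ n, C n) := by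
  intro a b ha hb hsub hna hnb
  by_contra hempty
  rw [Set.not_nonempty_iff_eq_empty] at hempty
  set K := ⋂ n, C n with hK
  have hKsub : ∀ n, K ⊆ C n := fun n => iInter_subset _ n
  have hKcl : IsClosed K := isClosed_iInter fun n => (hcpt n).isClosed
  have hKcpt : IsCompact K := (hcpt 0).of_isClosed_subset hKcl (hKsub 0)
  have hmem : ∀ {z}, z ∈ K → z ∈ a → z ∉ b := by
    intro z h1 h2 hzb
    have : z ∈ K ∩ (a ∩ b) := ⟨h1, h2, hzb⟩
    rw [hempty] at this; exact this
  have hKa : K ∩ a = K ∩ bᶜ := by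
    ext z
    refine ⟨fun ⟨h1, h2⟩ => ⟨h1, hmem h1 h2⟩, fun ⟨h1, h2⟩ => ⟨h1, ?_⟩⟩
    rcases hsub h1 with h | h
    · exact h
    · exact absurd h h2
  have hKb : K ∩ b = K ∩ aᶜ := by
    ext z
    constructor
    · rintro ⟨h1, h2⟩
      exact ⟨h1, fun hza => hmem h1 hza h2⟩
    · rintro ⟨h1, h2⟩
      rcases hsub h1 with h | h
      · exact absurd h h2
      · exact ⟨h1, h⟩
  have hK1cpt : IsCompact (K ∩ a) := by
    rw [hKa]
    exact hKcpt.of_isClosed_subset (hKcl.inter (isClosed_compl_iff.mpr hb)) inter_subset_left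
  have hK2cpt : IsCompact (K ∩ b) := by
    rw [hKb]
    exact hKcpt.of_isClosed_subset (hKcl.inter (isClosed_compl_iff.mpr ha)) inter_subset_left
  have hdisj : Disjoint (K ∩ a) (K ∩ b) := by
    rw [Set.disjoint_iff_inter_eq_empty]
    ext z
    simp only [mem_inter_iff, mem_empty_iff_false, iff_false, not_and]
    rintro ⟨h1, h2⟩ h3 h4
    exact hmem h1 h2 h4
  obtain ⟨U, V, hU, hV, hsU, hsV, hUV⟩ :=
    SeparatedNhds.of_isCompact_isCompact hK1cpt hK2cpt hdisj
  have hCn : ∃ n, C n ⊆ U ∪ V := by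
    by_contra hno
    push_neg at hno
    have hDne : ∀ n, (C n ∩ (U ∪ V)ᶜ).Nonempty := by
      intro n
      obtain ⟨z, hz1, hz2⟩ := not_subset.mp (hno n)
      exact ⟨z, hz1, hz2⟩
    obtain ⟨z, hz⟩ := IsCompact.nonempty_iInter_of_sequence_nonempty_isCompact_isClosed
      (fun n => C n ∩ (U ∪ V)ᶜ)
      (fun n => inter_subset_inter_left _ (hmono n)) hDne
      ((hcpt 0).of_isClosed_subset ((hcpt 0).isClosed.inter
        (isClosed_compl_iff.mpr (hU.union hV))) inter_subset_left)
      (fun n => (hcpt n).isClosed.inter (isClosed_compl_iff.mpr (hU.union hV)))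
    have hzK : z ∈ K := mem_iInter.mpr fun n => (mem_iInter.mp hz n).1
    have hzn : z ∉ U ∪ V := (mem_iInter.mp hz 0).2
    refine hzn ?_
    rcases hsub hzK with h | h
    · exact Or.inl (hsU ⟨hzK, h⟩)
    · exact Or.inr (hsV ⟨hzK, h⟩)
  obtain ⟨n, hn⟩ := hCn
  have h1 : (C n ∩ U).Nonempty := by
    obtain ⟨z, hz1, hz2⟩ := hna
    exact ⟨z, hKsub n hz1, hsU ⟨hz1, hz2⟩⟩
  have h2 : (C n ∩ V).Nonempty := by
    obtain ⟨z, hz1, hz2⟩ := hnb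
    exact ⟨z, hKsub n hz1, hsV ⟨hz1, hz2⟩⟩
  obtain ⟨z, hz⟩ := (hconn n) U V hU hV hn h1 h2
  exact (Set.disjoint_iff.mp hUV ⟨hz.2.1, hz.2.2⟩ : False)

lemma frontier_connectedComponentIn_subset {U : Set ℂ} (hU : IsOpen U) (z₀ : ℂ) :
    frontier (connectedComponentIn U z₀) ⊆ Uᶜ := by
  intro v hv
  by_cases hz₀ : z₀ ∈ U
  · set V := connectedComponentIn U z₀ with hV
    have hVopen : IsOpen V := hU.connectedComponentIn
    have hvnV : v ∉ V := by
      intro hmem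
      rw [frontier, hVopen.interior_eq] at hv
      exact hv.2 hmem
    intro hvU
    obtain ⟨r, hr, hball⟩ := Metric.isOpen_iff.mp hU v hvU
    have hvcl : v ∈ closure V := hv.1
    obtain ⟨w, hw1, hw2⟩ := Metric.mem_closure_iff.mp hvcl r hr
    have hwball : w ∈ ball v r := by
      rw [Metric.mem_ball, dist_comm]; exact hw2
    have hunion : IsPreconnected (ball v r ∪ V) :=
      IsPreconnected.union w hwball hw1 (convex_ball v r).isPreconnected
        isPreconnected_connectedComponentIn
    have hsub : ball v r ∪ V ⊆ U :=
      union_subset hball (connectedComponentIn_subset U z₀)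
    have hz₀mem : z₀ ∈ ball v r ∪ V :=
      Or.inr (mem_connectedComponentIn hz₀)
    have := hunion.subset_connectedComponentIn hz₀mem hsub
    exact hvnV (this (Or.inl (mem_ball_self hr)))
  · rw [connectedComponentIn_eq_empty hz₀] at hv
    simp at hv

lemma isPreconnected_ring {R : ℝ} (hR : 0 < R) : IsPreconnected {z : ℂ | R < ‖z‖} := by
  have hrank : 1 < Module.rank ℝ ℂ := by
    rw [Complex.rank_real_complex]; norm_num
  apply isPreconnected_of_forall ((R + 1 : ℝ) : ℂ)
  intro y hy
  have hyR : R < ‖y‖ := hy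
  refine ⟨sphere (0:ℂ) ‖y‖ ∪ segment ℝ ((‖y‖ : ℝ) : ℂ) ((R + 1 : ℝ) : ℂ), ?_, ?_, ?_, ?_⟩
  · rintro z (hz | hz)
    · rw [mem_sphere_zero_iff_norm] at hz
      simpa only [mem_setOf_eq, hz] using hyR
    · obtain ⟨a, b, ha, hb, hab, rfl⟩ := hz
      have heq : a • ((‖y‖ : ℝ) : ℂ) + b • ((R + 1 : ℝ) : ℂ)
          = ((a * ‖y‖ + b * (R+1) : ℝ) : ℂ) := by
        simp only [Complex.real_smul]
        push_cast
        ring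
      rw [heq]
      simp only [mem_setOf_eq, Complex.norm_real]
      have hstrict : R < a * ‖y‖ + b * (R + 1) := by
        rcases eq_or_lt_of_le ha with h | h
        · have hb1 : b = 1 := by linarith
          rw [← h, hb1]
          simp only [zero_mul, zero_add, one_mul]
          linarith
        · nlinarith [mul_le_mul_of_nonneg_left hyR.le (le_of_lt h)]
      calc R < a * ‖y‖ + b * (R+1) := hstrict
      _ ≤ |a * ‖y‖ + b * (R+1)| := le_abs_self _
  · exact Or.inr (right_mem_segment ℝ _ _)
  · apply Or.inl
    simp [mem_sphere_zero_iff_norm, abs_of_nonneg (norm_nonneg y)]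
  · apply IsPreconnected.union (((‖y‖ : ℝ)) : ℂ)
    · simp [mem_sphere_zero_iff_norm, abs_of_nonneg (norm_nonneg y)]
    · exact left_mem_segment ℝ _ _
    · exact isPreconnected_sphere hrank 0 ‖y‖
    · exact (convex_segment _ _).isPreconnected

end ShabatTree

namespace ShabatTree

/-! ### No bounded complementary components (maximum principle) -/

variable (P : Polynomial ℂ)

lemma deriv_eq_zero_of_im_eq_zero {V : Set ℂ} (hV : IsOpen V)
    (him : ∀ z ∈ V, (P.eval z).im = 0) {z : ℂ} (hz : z ∈ V) :
    P.derivative.eval z = 0 := by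
  obtain ⟨r, hr, hball⟩ := Metric.isOpen_iff.mp hV z hz
  have hhor : (P.derivative.eval z).im = 0 := by
    have hd : HasDerivAt (fun w : ℂ => P.eval (z + w)) (P.derivative.eval z) 0 := by
      simpa [Function.comp_def] using (P.hasDerivAt (z + 0)).comp (0 : ℂ) ((hasDerivAt_id (0:ℂ)).const_add z)
    have hdr : HasDerivAt (fun t : ℝ => P.eval (z + t)) (P.derivative.eval z) 0 := by
      exact_mod_cast hd.comp_ofReal (z := (0:ℝ))
    have hdim : HasDerivAt (fun t : ℝ => (P.eval (z + t)).im) (P.derivative.eval z).im 0 := by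
      have := (Complex.imCLM.hasFDerivAt (x := P.eval (z + (0:ℝ)))).comp_hasDerivAt 0 hdr
      simpa [Function.comp_def] using this
    have hzero : HasDerivAt (fun t : ℝ => (P.eval (z + t)).im) 0 0 := by
      refine (hasDerivAt_const (0:ℝ) (0:ℝ)).congr_of_eventuallyEq ?_
      filter_upwards [Metric.ball_mem_nhds (0:ℝ) hr] with t ht
      have : z + (t:ℂ) ∈ V := by
        apply hball
        simpa [Complex.dist_eq, Complex.norm_real] using ht
      simp [him _ this]
    exact hdim.unique hzero
  have hver : (P.derivative.eval z * Complex.I).im = 0 := by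
    have hd : HasDerivAt (fun w : ℂ => P.eval (z + w * Complex.I))
        (P.derivative.eval z * Complex.I) 0 := by
      have h1 : HasDerivAt (fun w : ℂ => z + w * Complex.I) Complex.I 0 := by
        simpa using ((hasDerivAt_id (0:ℂ)).mul_const Complex.I).const_add z
      have := (P.hasDerivAt (z + 0 * Complex.I)).comp (0 : ℂ) h1
      simpa [Function.comp_def] using this
    have hdr : HasDerivAt (fun t : ℝ => P.eval (z + t * Complex.I))
        (P.derivative.eval z * Complex.I) 0 := by
      exact_mod_cast hd.comp_ofReal (z := (0:ℝ))
    have hdim : HasDerivAt (fun t : ℝ => (P.eval (z + t * Complex.I)).im)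
        (P.derivative.eval z * Complex.I).im 0 := by
      have := (Complex.imCLM.hasFDerivAt
        (x := P.eval (z + (0:ℝ) * Complex.I))).comp_hasDerivAt 0 hdr
      simpa [Function.comp_def] using this
    have hzero : HasDerivAt (fun t : ℝ => (P.eval (z + t * Complex.I)).im) 0 0 := by
      refine (hasDerivAt_const (0:ℝ) (0:ℝ)).congr_of_eventuallyEq ?_
      filter_upwards [Metric.ball_mem_nhds (0:ℝ) hr] with t ht
      have : z + (t:ℂ) * Complex.I ∈ V := by
        apply hball
        simpa [Complex.dist_eq, Complex.norm_real] using ht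
      simp [him _ this]
    exact hdim.unique hzero
  have hre : (P.derivative.eval z).re = 0 := by
    simpa [Complex.mul_im] using hver
  exact Complex.ext (by simpa using hre) (by simpa using hhor)

lemma no_bounded_component (hP : 0 < P.natDegree) {T : Set ℂ}
    (hTsub : ∀ z ∈ T, (P.eval z).im = 0) (hTcl : IsClosed T) {z₀ : ℂ} (hz₀ : z₀ ∈ Tᶜ)
    (hbdd : IsBounded (connectedComponentIn Tᶜ z₀)) : False := by
  set V := connectedComponentIn Tᶜ z₀ with hV
  have hVopen : IsOpen V := hTcl.isOpen_compl.connectedComponentIn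
  have hz₀V : z₀ ∈ V := mem_connectedComponentIn hz₀
  have hfront : ∀ v ∈ frontier V, (P.eval v).im = 0 := by
    intro v hv
    have : v ∈ Tᶜᶜ := frontier_connectedComponentIn_subset hTcl.isOpen_compl z₀ hv
    exact hTsub v (by simpa using this)
  have him : ∀ z ∈ V, (P.eval z).im = 0 := by
    intro z hz
    have hzcl : z ∈ closure V := subset_closure hz
    have h1 : ‖Complex.exp (Complex.I * P.eval z)‖ ≤ 1 := by
      refine Complex.norm_le_of_forall_mem_frontier_norm_le
        (f := fun w => Complex.exp (Complex.I * P.eval w)) hbdd ?_ ?_ hzcl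
      · exact (Complex.differentiable_exp.comp
          ((differentiable_const Complex.I).mul P.differentiable)).diffContOnCl
      · intro v hv
        have h0 : (Complex.I * P.eval v).re = 0 := by
          simp [Complex.mul_re, hfront v hv]
        rw [show ‖Complex.exp (Complex.I * P.eval v)‖
            = ‖Complex.exp (Complex.I * P.eval v)‖ from rfl,
          Complex.norm_exp, h0, Real.exp_zero]
    have h2 : ‖Complex.exp (-Complex.I * P.eval z)‖ ≤ 1 := by
      refine Complex.norm_le_of_forall_mem_frontier_norm_le
        (f := fun w => Complex.exp (-Complex.I * P.eval w)) hbdd ?_ ?_ hzcl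
      · exact (Complex.differentiable_exp.comp
          ((differentiable_const (-Complex.I)).mul P.differentiable)).diffContOnCl
      · intro v hv
        have h0 : (-Complex.I * P.eval v).re = 0 := by
          simp [Complex.mul_re, hfront v hv]
        rw [show ‖Complex.exp (-Complex.I * P.eval v)‖
            = ‖Complex.exp (-Complex.I * P.eval v)‖ from rfl,
          Complex.norm_exp, h0, Real.exp_zero]
    rw [show ‖Complex.exp (Complex.I * P.eval z)‖
        = ‖Complex.exp (Complex.I * P.eval z)‖ from rfl, Complex.norm_exp] at h1
    rw [show ‖Complex.exp (-Complex.I * P.eval z)‖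
        = ‖Complex.exp (-Complex.I * P.eval z)‖ from rfl, Complex.norm_exp] at h2
    have e1 : (Complex.I * P.eval z).re = -(P.eval z).im := by simp [Complex.mul_re]
    have e2 : (-Complex.I * P.eval z).re = (P.eval z).im := by simp [Complex.mul_re]
    rw [e1] at h1; rw [e2] at h2
    have l1 : -(P.eval z).im ≤ 0 := Real.exp_le_one_iff.mp h1
    have l2 : (P.eval z).im ≤ 0 := Real.exp_le_one_iff.mp h2
    linarith
  have hder : ∀ z ∈ V, P.derivative.eval z = 0 := fun z hz =>
    deriv_eq_zero_of_im_eq_zero P hVopen him hz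
  obtain ⟨r, hr, hball⟩ := Metric.isOpen_iff.mp hVopen z₀ hz₀V
  have hinf : Set.Infinite {x : ℂ | P.derivative.IsRoot x} := by
    refine Set.Infinite.mono ?_ (Set.Ioo_infinite (show (0:ℝ) < r/2 by linarith)
      |>.image (f := fun t : ℝ => z₀ + (t:ℂ)) ?_)
    · rintro x ⟨t, ht, rfl⟩
      have : z₀ + (t:ℂ) ∈ V := by
        apply hball
        have : |t| < r := by
          rw [abs_of_pos ht.1]; linarith [ht.2]
        simpa [Complex.dist_eq, Complex.norm_real] using this
      exact hder _ this
    · intro a _ b _ hab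
      have := add_left_cancel hab
      exact_mod_cast this
  have h0 : P.derivative = 0 := P.derivative.eq_zero_of_infinite_isRoot hinf
  have : P.natDegree = 0 := natDegree_eq_zero_of_derivative_eq_zero h0
  omega

/-! ### The complement of `T` is connected -/

lemma compl_isConnected (hP : 0 < P.natDegree) :
    IsConnected (P.eval ⁻¹' seg)ᶜ := by
  set T : Set ℂ := P.eval ⁻¹' seg with hT
  have hTcl : IsClosed T := isClosed_seg.preimage P.continuous
  obtain ⟨R₀, hR₀⟩ := (isBounded_norm_le P hP 1).subset_ball (0:ℂ)
  set R := max R₀ 1 with hR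
  have hRpos : (0:ℝ) < R := lt_of_lt_of_le one_pos (le_max_right _ _)
  have hring : {z : ℂ | R < ‖z‖} ⊆ Tᶜ := by
    intro z hz
    simp only [mem_compl_iff, hT, mem_preimage]
    intro hmem
    have h1 : ‖P.eval z‖ ≤ 1 := norm_le_one_of_mem_seg hmem
    have h2 : z ∈ ball (0:ℂ) R₀ := hR₀ h1
    rw [mem_ball_zero_iff] at h2
    have h3 : R < ‖z‖ := hz
    have h4 : R₀ ≤ R := le_max_left _ _
    linarith
  have hringne : ((R + 1 : ℝ) : ℂ) ∈ {z : ℂ | R < ‖z‖} := by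
    simp only [mem_setOf_eq, Complex.norm_real, Real.norm_eq_abs]
    rw [abs_of_pos (by linarith)]
    linarith
  constructor
  · exact ⟨_, hring hringne⟩
  have hmeet : ∀ z₀ ∈ Tᶜ, ∃ y, y ∈ connectedComponentIn Tᶜ z₀ ∧ R < ‖y‖ := by
    intro z₀ hz₀
    by_contra hno
    push_neg at hno
    refine no_bounded_component P hP (fun z hz => hz.1) hTcl hz₀ ?_
    refine (isBounded_closedBall (x := (0:ℂ)) (r := R)).subset ?_
    intro y hy
    rw [mem_closedBall_zero_iff]
    exact hno y hy
  apply isPreconnected_of_forall_pair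
  intro x hx y hy
  refine ⟨connectedComponentIn Tᶜ x ∪ ({z : ℂ | R < ‖z‖} ∪ connectedComponentIn Tᶜ y),
    ?_, ?_, ?_, ?_⟩
  · refine union_subset (connectedComponentIn_subset _ _)
      (union_subset hring (connectedComponentIn_subset _ _))
  · exact Or.inl (mem_connectedComponentIn hx)
  · exact Or.inr (Or.inr (mem_connectedComponentIn hy))
  · obtain ⟨y1, hy1, hy1R⟩ := hmeet x hx
    obtain ⟨y2, hy2, hy2R⟩ := hmeet y hy
    have m1 : y1 ∈ {z : ℂ | R < ‖z‖} ∪ connectedComponentIn Tᶜ y := Or.inl hy1R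
    have m2 : y2 ∈ {z : ℂ | R < ‖z‖} := hy2R
    refine IsPreconnected.union y1 hy1 m1 isPreconnected_connectedComponentIn ?_
    exact IsPreconnected.union y2 m2 hy2 (isPreconnected_ring hRpos)
      isPreconnected_connectedComponentIn

end ShabatTree

namespace ShabatTree

/-! ### Local structure of the sublevel sets -/

lemma convex_Theta (s : ℝ) : Convex ℝ {w : ℂ | infDist w seg < s} := by
  rcases le_or_gt s 0 with h | h
  · have : {w : ℂ | infDist w seg < s} = ∅ := by
      ext w; simp only [mem_setOf_eq, mem_empty_iff_false, iff_false, not_lt]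
      exact le_trans h infDist_nonneg
    rw [this]; exact convex_empty
  · have : {w : ℂ | infDist w seg < s} = Metric.thickening s seg := by
      ext w
      rw [Metric.mem_thickening_iff_infDist_lt seg_nonempty]
      rfl
    rw [this]
    exact convex_seg.thickening s

lemma local_structure (P : Polynomial ℂ)
    (hcrit : ∀ z : ℂ, P.derivative.eval z = 0 → P.eval z = 1 ∨ P.eval z = -1)
    {s : ℝ} (hs : 0 < s) {z : ℂ} (hz : z ∈ X P s) {ε : ℝ} (hε : 0 < ε) :
    ∃ B : Set ℂ, IsOpen B ∧ z ∈ B ∧ B ⊆ ball z ε ∧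
      IsPreconnected (G P s ∩ B) ∧ (G P s ∩ B).Nonempty ∧ z ∈ closure (G P s ∩ B) := by
  have hle : u P z ≤ s := hz
  rcases lt_or_eq_of_le hle with hlt | heq
  · obtain ⟨r, hr, hball⟩ := Metric.isOpen_iff.mp (isOpen_G P s) z hlt
    have hmin : 0 < min r ε := lt_min hr hε
    have hsub : ball z (min r ε) ⊆ G P s :=
      (ball_subset_ball (min_le_left r ε)).trans hball
    have hGB : G P s ∩ ball z (min r ε) = ball z (min r ε) :=
      inter_eq_self_of_subset_right hsub
    refine ⟨ball z (min r ε), isOpen_ball, mem_ball_self hmin,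
      ball_subset_ball (min_le_right r ε), ?_, ?_, ?_⟩
    · rw [hGB]; exact (convex_ball z _).isPreconnected
    · rw [hGB]; exact ⟨z, mem_ball_self hmin⟩
    · rw [hGB]; exact subset_closure (mem_ball_self hmin)
  · have hw₀ : u P z = s := heq
    have hder : P.derivative.eval z ≠ 0 := by
      intro h0
      rcases hcrit z h0 with h | h
      · have : u P z = 0 := by
          rw [u, h]
          exact (IsClosed.mem_iff_infDist_zero isClosed_seg seg_nonempty).mp one_mem_seg
        rw [this] at hw₀; exact absurd hw₀.symm (ne_of_gt hs)
      · have : u P z = 0 := by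
          rw [u, h]
          exact (IsClosed.mem_iff_infDist_zero isClosed_seg seg_nonempty).mp neg_one_mem_seg
        rw [this] at hw₀; exact absurd hw₀.symm (ne_of_gt hs)
    have hsd : HasStrictDerivAt (fun x : ℂ => P.eval x) (P.derivative.eval z) z :=
      P.hasStrictDerivAt z
    set e := (hsd.hasStrictFDerivAt_equiv hder).toOpenPartialHomeomorph (fun x : ℂ => P.eval x)
      with he
    have hzsource : z ∈ e.source :=
      (hsd.hasStrictFDerivAt_equiv hder).mem_toOpenPartialHomeomorph_source
    have hecoe : ∀ x, e x = P.eval x := fun x => rfl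
    set w₀ : ℂ := P.eval z with hw₀def
    have htarget : w₀ ∈ e.target := by
      have := e.map_source hzsource
      rwa [hecoe] at this
    have hsymmz : e.symm w₀ = z := by
      have := e.left_inv hzsource
      rwa [hecoe] at this
    have hcontsymm : ContinuousAt e.symm w₀ := e.continuousAt_symm htarget
    obtain ⟨δ₁, hδ₁, hδ₁sub⟩ := Metric.isOpen_iff.mp e.open_target w₀ htarget
    obtain ⟨δ₂, hδ₂, hδ₂sub⟩ := Metric.continuousAt_iff.mp hcontsymm ε hε
    set δ := min δ₁ δ₂ with hδdef
    have hδ : 0 < δ := lt_min hδ₁ hδ₂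
    have hballtarget : ball w₀ δ ⊆ e.target :=
      (ball_subset_ball (min_le_left _ _)).trans hδ₁sub
    set Θ : Set ℂ := {w : ℂ | infDist w seg < s} with hΘ
    set B : Set ℂ := e.source ∩ (fun x : ℂ => P.eval x) ⁻¹' (ball w₀ δ) with hB
    have hBopen : IsOpen B := e.open_source.inter (isOpen_ball.preimage P.continuous)
    have hzB : z ∈ B := ⟨hzsource, by simp [mem_ball, hδ, ← hw₀def]⟩
    have hBball : B ⊆ ball z ε := by
      rintro x ⟨hx1, hx2⟩
      have hex : e x ∈ ball w₀ δ := by rw [hecoe]; exact hx2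
      have : dist (e.symm (e x)) (e.symm w₀) < ε := by
        apply hδ₂sub
        calc dist (e x) w₀ < δ := hex
        _ ≤ δ₂ := min_le_right _ _
      rwa [e.left_inv hx1, hsymmz] at this
    have hkey : G P s ∩ B = e.symm '' (ball w₀ δ ∩ Θ) := by
      ext x
      constructor
      · rintro ⟨hxG, hx1, hx2⟩
        refine ⟨P.eval x, ⟨hx2, hxG⟩, ?_⟩
        rw [← hecoe, e.left_inv hx1]
      · rintro ⟨w, ⟨hw1, hw2⟩, rfl⟩
        have hwt : w ∈ e.target := hballtarget hw1
        have hxs : e.symm w ∈ e.source := e.map_target hwt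
        have hval : P.eval (e.symm w) = w := by
          rw [← hecoe, e.right_inv hwt]
        constructor
        · show u P (e.symm w) < s
          rw [u, hval]; exact hw2
        · exact ⟨hxs, by rw [mem_preimage, hval]; exact hw1⟩
    have hpre : IsPreconnected (G P s ∩ B) := by
      rw [hkey]
      have hconv : Convex ℝ (ball w₀ δ ∩ Θ) := (convex_ball _ _).inter (convex_Theta s)
      exact hconv.isPreconnected.image _ (e.continuousOn_symm.mono
        ((inter_subset_left).trans hballtarget))
    obtain ⟨p, hpseg, hpdist⟩ := isCompact_seg.exists_infDist_eq_dist seg_nonempty w₀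
    have hdistp : dist w₀ p = s := by rw [← hpdist, ← hw₀]; rfl
    have happrox : ∀ ρ : ℝ, 0 < ρ → ∃ w ∈ ball w₀ δ ∩ Θ, dist w w₀ < ρ := by
      intro ρ hρ
      set t : ℝ := min (min (δ / (2 * s)) (ρ / (2 * s))) (1/2) with ht
      have ht0 : 0 < t := by
        apply lt_min (lt_min _ _) <;> positivity
      have ht1 : t ≤ 1/2 := min_le_right _ _
      set w : ℂ := w₀ + t • (p - w₀) with hwdef
      have hdistw : dist w w₀ = t * s := by
        rw [hwdef, dist_eq_norm]
        simp only [add_sub_cancel_left]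
        rw [norm_smul, Real.norm_eq_abs, abs_of_pos ht0]
        congr 1
        rw [← hdistp, dist_eq_norm, norm_sub_rev]
      have hts : t * s < δ := by
        have h5 : t ≤ δ / (2 * s) := (min_le_left _ _).trans (min_le_left _ _)
        calc t * s ≤ (δ / (2 * s)) * s := by nlinarith
        _ = δ / 2 := by field_simp
        _ < δ := by linarith
      have htρ : t * s < ρ := by
        have h5 : t ≤ ρ / (2 * s) := (min_le_left _ _).trans (min_le_right _ _)
        calc t * s ≤ (ρ / (2 * s)) * s := by nlinarith
        _ = ρ / 2 := by field_simp
        _ < ρ := by linarith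
      have hwΘ : w ∈ Θ := by
        show infDist w seg < s
        calc infDist w seg ≤ dist w p := infDist_le_dist_of_mem hpseg
        _ = (1 - t) * s := by
          rw [hwdef, dist_eq_norm]
          have heq2 : w₀ + t • (p - w₀) - p = (1 - t) • (w₀ - p) := by
            module
          have hnorm : ‖w₀ - p‖ = s := by rw [← hdistp, dist_eq_norm]
          rw [heq2, norm_smul, Real.norm_eq_abs, abs_of_nonneg (by linarith : (0:ℝ) ≤ 1 - t),
            hnorm]
        _ < 1 * s := by nlinarith
        _ = s := one_mul s
      exact ⟨w, ⟨by rw [mem_ball, hdistw]; exact hts, hwΘ⟩, by rw [hdistw]; exact htρ⟩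
    have hne : (G P s ∩ B).Nonempty := by
      obtain ⟨w, hw, -⟩ := happrox 1 one_pos
      rw [hkey]
      exact ⟨e.symm w, w, hw, rfl⟩
    have hclosure : z ∈ closure (G P s ∩ B) := by
      rw [Metric.mem_closure_iff]
      intro ε' hε'
      obtain ⟨ρ, hρ, hρsub⟩ := Metric.continuousAt_iff.mp hcontsymm ε' hε'
      obtain ⟨w, hw, hwρ⟩ := happrox ρ hρ
      refine ⟨e.symm w, ?_, ?_⟩
      · rw [hkey]; exact ⟨w, hw, rfl⟩
      · have := hρsub (show dist w w₀ < ρ from hwρ)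
        rw [hsymmz] at this
        rw [dist_comm]
        exact this
    exact ⟨B, hBopen, hzB, hBball, hpre, hne, hclosure⟩

end ShabatTree

namespace ShabatTree

/-! ### `T` itself is connected -/

variable (P : Polynomial ℂ)

lemma T_isPreconnected (hP : 0 < P.natDegree)
    (hcrit : ∀ z : ℂ, P.derivative.eval z = 0 → P.eval z = 1 ∨ P.eval z = -1) :
    IsPreconnected (P.eval ⁻¹' seg) := by
  set T : Set ℂ := P.eval ⁻¹' seg with hT
  have hTu : ∀ {z : ℂ}, z ∈ T ↔ u P z = 0 := by
    intro z; rw [hT, mem_preimage, ← u_eq_zero_iff P]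
  by_contra hcon
  rw [IsPreconnected] at hcon
  push_neg at hcon
  obtain ⟨a, b, ha, hb, hsub, ⟨z₁, hz₁T, hz₁a⟩, ⟨z₂, hz₂T, hz₂b⟩, hempty⟩ := hcon
  have hz₁u : u P z₁ = 0 := hTu.mp hz₁T
  have hz₂u : u P z₂ = 0 := hTu.mp hz₂T
  set C : ℝ → Set ℂ := fun s => connectedComponentIn (X P s) z₁ with hC
  have hz₁X : ∀ {s : ℝ}, 0 ≤ s → z₁ ∈ X P s := fun hs => mem_X_of_le P hz₁u hs
  have hCmono : ∀ {s s' : ℝ}, s ≤ s' → C s ⊆ C s' :=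
    fun h => connectedComponentIn_mono z₁ (X_mono P h)
  have hCcpt : ∀ s : ℝ, IsCompact (C s) :=
    fun s => isCompact_connectedComponentIn (isCompact_X P hP s)
  have hCconn : ∀ s : ℝ, IsPreconnected (C s) := fun s => isPreconnected_connectedComponentIn
  have hCne : ∀ {s : ℝ}, 0 ≤ s → (C s).Nonempty :=
    fun hs => ⟨z₁, mem_connectedComponentIn (hz₁X hs)⟩
  have hposn : ∀ n : ℕ, (0:ℝ) < 1/(n+1) := fun n => by positivity
  have hdivmono : ∀ n : ℕ, (1:ℝ)/(n+1+1) ≤ 1/(n+1) := by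
    intro n
    apply one_div_le_one_div_of_le
    · positivity
    · linarith
  have hstep1 : ∃ s : ℝ, 0 < s ∧ z₂ ∉ C s := by
    by_contra hno
    push_neg at hno
    set K : Set ℂ := ⋂ n : ℕ, C (1/(n+1)) with hK
    have hKpre : IsPreconnected K := by
      apply isPreconnected_iInter_of_sequence
      · exact fun n => hCcpt _
      · exact fun n => hCne (hposn n).le
      · exact fun n => hCconn _
      · intro n
        apply hCmono
        push_cast
        exact hdivmono n
    have hz₁K : z₁ ∈ K := mem_iInter.mpr fun n => mem_connectedComponentIn (hz₁X (hposn n).le)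
    have hz₂K : z₂ ∈ K := mem_iInter.mpr fun n => hno _ (hposn n)
    have hKT : K ⊆ T := by
      intro z hz
      rw [hTu]
      by_contra hne0
      have hpos : 0 < u P z := lt_of_le_of_ne (u_nonneg P z) (Ne.symm hne0)
      obtain ⟨n, hn⟩ := exists_nat_one_div_lt hpos
      have h1 : z ∈ C (1/(n+1)) := mem_iInter.mp hz n
      have h2 : z ∈ X P (1/(n+1)) := connectedComponentIn_subset _ _ h1
      have h3 : u P z ≤ 1/(n+1) := h2
      linarith
    obtain ⟨z, hz⟩ := hKpre a b ha hb (hKT.trans hsub) ⟨z₁, hz₁K, hz₁a⟩ ⟨z₂, hz₂K, hz₂b⟩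
    have : z ∈ T ∩ (a ∩ b) := ⟨hKT hz.1, hz.2⟩
    rw [hempty] at this
    exact this
  obtain ⟨s₁, hs₁pos, hs₁⟩ := hstep1
  have hstep2 : ∃ s₀ : ℝ, 0 < s₀ ∧ z₂ ∈ C s₀ := by
    set R : ℝ := max ‖z₁‖ ‖z₂‖ with hR
    have hz₁D : z₁ ∈ closedBall (0:ℂ) R := by
      rw [mem_closedBall_zero_iff]; exact le_max_left _ _
    have hz₂D : z₂ ∈ closedBall (0:ℂ) R := by
      rw [mem_closedBall_zero_iff]; exact le_max_right _ _
    obtain ⟨m, hmD, hm⟩ := (isCompact_closedBall (0:ℂ) R).exists_isMaxOn ⟨z₁, hz₁D⟩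
      (continuous_u P).continuousOn
    refine ⟨u P m + 1, by linarith [u_nonneg P m], ?_⟩
    have hD : closedBall (0:ℂ) R ⊆ X P (u P m + 1) := by
      intro z hz
      show u P z ≤ u P m + 1
      exact le_trans (hm hz) (by linarith)
    have := (convex_closedBall (0:ℂ) R).isPreconnected.subset_connectedComponentIn hz₁D hD
    exact this hz₂D
  obtain ⟨s₀, hs₀pos, hs₀⟩ := hstep2
  set S : Set ℝ := {s : ℝ | 0 < s ∧ z₂ ∉ C s} with hS
  have hSne : S.Nonempty := ⟨s₁, hs₁pos, hs₁⟩
  have hSbdd : BddAbove S := by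
    refine ⟨s₀, fun s hs => ?_⟩
    by_contra hlt
    push_neg at hlt
    exact hs.2 (hCmono hlt.le hs₀)
  set sstar : ℝ := sSup S with hsstar
  have hsstarpos : 0 < sstar := lt_of_lt_of_le hs₁pos (le_csSup hSbdd ⟨hs₁pos, hs₁⟩)
  have hupper : ∀ s : ℝ, sstar < s → z₂ ∈ C s := by
    intro s hs
    by_contra hns
    have : s ∈ S := ⟨hsstarpos.trans hs, hns⟩
    exact absurd (le_csSup hSbdd this) (not_le.mpr hs)
  have hlower : ∀ s : ℝ, 0 < s → s < sstar → z₂ ∉ C s := by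
    intro s hs hlt hmem
    obtain ⟨s'', hs''S, hs''⟩ := exists_lt_of_lt_csSup hSne hlt
    exact hs''S.2 (hCmono hs''.le hmem)
  have hz₂Cstar : z₂ ∈ C sstar := by
    set K : Set ℂ := ⋂ n : ℕ, C (sstar + 1/(n+1)) with hK
    have hKpre : IsPreconnected K := by
      apply isPreconnected_iInter_of_sequence
      · exact fun n => hCcpt _
      · exact fun n => hCne (by positivity)
      · exact fun n => hCconn _
      · intro n
        apply hCmono
        push_cast
        linarith [hdivmono n]
    have hz₁K : z₁ ∈ K := mem_iInter.mpr fun n =>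
      mem_connectedComponentIn (hz₁X (by positivity))
    have hz₂K : z₂ ∈ K := mem_iInter.mpr fun n =>
      hupper _ (by have := hposn n; linarith)
    have hKX : K ⊆ X P sstar := by
      intro z hz
      show u P z ≤ sstar
      by_contra hgt
      push_neg at hgt
      obtain ⟨n, hn⟩ := exists_nat_one_div_lt (sub_pos.mpr hgt)
      have h1 : z ∈ C (sstar + 1/(n+1)) := mem_iInter.mp hz n
      have h2 : z ∈ X P (sstar + 1/(n+1)) := connectedComponentIn_subset _ _ h1
      have h3 : u P z ≤ sstar + 1/(n+1) := h2
      linarith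
    exact (hKpre.subset_connectedComponentIn hz₁K hKX) hz₂K
  set Γ : Set ℂ := connectedComponentIn (G P sstar) z₁ with hΓ
  have hz₁G : z₁ ∈ G P sstar := by show u P z₁ < sstar; rw [hz₁u]; exact hsstarpos
  have hz₂G : z₂ ∈ G P sstar := by show u P z₂ < sstar; rw [hz₂u]; exact hsstarpos
  have hz₁Γ : z₁ ∈ Γ := mem_connectedComponentIn hz₁G
  have hΓopen : IsOpen Γ := (isOpen_G P sstar).connectedComponentIn
  have hΓpre : IsPreconnected Γ := isPreconnected_connectedComponentIn
  have hΓsub : Γ ⊆ G P sstar := connectedComponentIn_subset _ _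
  set Cstar : Set ℂ := C sstar with hCstar
  have hCstarX : Cstar ⊆ X P sstar := connectedComponentIn_subset _ _
  have hBex : ∀ z : ℂ, z ∈ Cstar ∩ closure Γ →
      ∃ B : Set ℂ, IsOpen B ∧ z ∈ B ∧ B ∩ Cstar ⊆ closure Γ := by
    rintro z ⟨hzC, hzcl⟩
    obtain ⟨B, hBopen, hzB, -, hBpre, hBne, hBcl⟩ :=
      local_structure P hcrit hsstarpos (hCstarX hzC) one_pos
    have hGB : G P sstar ∩ B ⊆ Γ := by
      obtain ⟨y, hyΓ, hyB⟩ : ∃ y, y ∈ Γ ∧ y ∈ B := by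
        rw [_root_.mem_closure_iff] at hzcl
        obtain ⟨y, hy1, hy2⟩ := hzcl B hBopen hzB
        exact ⟨y, hy2, hy1⟩
      have hyGB : y ∈ G P sstar ∩ B := ⟨hΓsub hyΓ, hyB⟩
      have hun : IsPreconnected ((G P sstar ∩ B) ∪ Γ) :=
        IsPreconnected.union y hyGB hyΓ hBpre hΓpre
      have hz₁un : z₁ ∈ (G P sstar ∩ B) ∪ Γ := Or.inr hz₁Γ
      have hsubG : (G P sstar ∩ B) ∪ Γ ⊆ G P sstar :=
        union_subset inter_subset_left hΓsub
      exact (subset_union_left).trans (hun.subset_connectedComponentIn hz₁un hsubG)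
    refine ⟨B, hBopen, hzB, ?_⟩
    rintro z' ⟨hz'B, hz'C⟩
    obtain ⟨ε', hε', hball'⟩ := Metric.isOpen_iff.mp hBopen z' hz'B
    obtain ⟨B', -, -, hB'ball, -, -, hB'cl⟩ :=
      local_structure P hcrit hsstarpos (hCstarX hz'C) hε'
    have : G P sstar ∩ B' ⊆ Γ := by
      refine subset_trans ?_ hGB
      exact inter_subset_inter_right _ (hB'ball.trans hball')
    exact (closure_mono this) hB'cl
  choose! B hBopen hBmem hBsub using hBex
  have hCstarcl : Cstar ⊆ closure Γ := by
    by_contra hnot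
    rw [not_subset] at hnot
    obtain ⟨w, hwC, hwcl⟩ := hnot
    set O₁ : Set ℂ := ⋃ z : ℂ, ⋃ _ : z ∈ Cstar ∩ closure Γ, B z with hO₁
    set O₂ : Set ℂ := (closure Γ)ᶜ with hO₂
    have hO₁open : IsOpen O₁ :=
      isOpen_iUnion fun z => isOpen_iUnion fun hz => hBopen z hz
    have hO₂open : IsOpen O₂ := isClosed_closure.isOpen_compl
    have hOsub : Cstar ⊆ O₁ ∪ O₂ := by
      intro z hz
      by_cases hcl : z ∈ closure Γ
      · exact Or.inl (mem_iUnion.mpr ⟨z, mem_iUnion.mpr ⟨⟨hz, hcl⟩, hBmem z ⟨hz, hcl⟩⟩⟩)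
      · exact Or.inr hcl
    have hO₁ne : (Cstar ∩ O₁).Nonempty := by
      have hz₁cl : z₁ ∈ closure Γ := subset_closure hz₁Γ
      have hz₁C : z₁ ∈ Cstar := mem_connectedComponentIn (hz₁X hsstarpos.le)
      exact ⟨z₁, hz₁C, mem_iUnion.mpr ⟨z₁, mem_iUnion.mpr ⟨⟨hz₁C, hz₁cl⟩,
        hBmem z₁ ⟨hz₁C, hz₁cl⟩⟩⟩⟩
    have hO₂ne : (Cstar ∩ O₂).Nonempty := ⟨w, hwC, hwcl⟩
    obtain ⟨z, hzC, hzO₁, hzO₂⟩ := (hCconn sstar) O₁ O₂ hO₁open hO₂open hOsub hO₁ne hO₂ne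
    obtain ⟨z₀, hz₀⟩ := mem_iUnion.mp hzO₁
    obtain ⟨hz₀mem, hzB₀⟩ := mem_iUnion.mp hz₀
    have : z ∈ closure Γ := hBsub z₀ hz₀mem ⟨hzB₀, hzC⟩
    exact hzO₂ this
  have hz₂Γ : z₂ ∈ Γ := by
    have hz₂cl : z₂ ∈ closure Γ := hCstarcl hz₂Cstar
    have hz₂Γ₂ : z₂ ∈ connectedComponentIn (G P sstar) z₂ := mem_connectedComponentIn hz₂G
    rw [_root_.mem_closure_iff] at hz₂cl
    obtain ⟨y, hyΓ₂, hyΓ⟩ := hz₂cl (connectedComponentIn (G P sstar) z₂)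
      ((isOpen_G P sstar).connectedComponentIn) hz₂Γ₂
    rw [hΓ] at hyΓ ⊢
    have h1 := connectedComponentIn_eq (x := z₂) hyΓ₂
    have h2 := connectedComponentIn_eq (x := z₁) hyΓ
    rw [h2, ← h1]
    exact hz₂Γ₂
  have hΓconn : IsConnected Γ := ⟨⟨z₁, hz₁Γ⟩, hΓpre⟩
  have hΓpath : IsPathConnected Γ := (hΓopen.isConnected_iff_isPathConnected).mp hΓconn
  obtain ⟨γ, hγ⟩ := hΓpath.joinedIn z₁ hz₁Γ z₂ hz₂Γ
  set Kp : Set ℂ := range γ with hKp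
  have hKpcpt : IsCompact Kp := isCompact_range γ.continuous
  have hKpne : Kp.Nonempty := ⟨z₁, ⟨0, by simp⟩⟩
  have hKpΓ : Kp ⊆ Γ := by
    rintro x ⟨t, rfl⟩
    exact hγ t
  obtain ⟨m, hmK, hm⟩ := hKpcpt.exists_isMaxOn hKpne (continuous_u P).continuousOn
  have hmlt : u P m < sstar := hΓsub (hKpΓ hmK)
  set s : ℝ := (u P m + sstar) / 2 with hsdef
  have hspos : 0 < s := by
    have := u_nonneg P m
    simp only [hsdef]
    linarith
  have hslt : s < sstar := by simp only [hsdef]; linarith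
  have hKpX : Kp ⊆ X P s := by
    intro x hx
    show u P x ≤ s
    have hle2 : u P x ≤ u P m := hm hx
    simp only [hsdef]
    linarith
  have hKppre : IsPreconnected Kp := isPreconnected_range γ.continuous
  have hz₁Kp : z₁ ∈ Kp := ⟨0, by simp⟩
  have hz₂Kp : z₂ ∈ Kp := ⟨1, by simp⟩
  have : z₂ ∈ C s := (hKppre.subset_connectedComponentIn hz₁Kp hKpX) hz₂Kp
  exact hlower s hspos hslt this

end ShabatTree

/-- For a nonconstant polynomial `P` all of whose critical values lie in `{-1, 1}`
(a Shabat polynomial), the set `T_f = P⁻¹([-1,1])` is compact and connected,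
and its complement in `ℂ` is connected. -/
theorem shabat_polynomial_preimage_is_finite_tree
    (P : Polynomial ℂ) (hP : 0 < P.natDegree)
    (hcrit : ∀ z : ℂ, P.derivative.eval z = 0 → P.eval z = 1 ∨ P.eval z = -1) :
    IsCompact {z : ℂ | (P.eval z).im = 0 ∧ -1 ≤ (P.eval z).re ∧ (P.eval z).re ≤ 1} ∧
    IsConnected {z : ℂ | (P.eval z).im = 0 ∧ -1 ≤ (P.eval z).re ∧ (P.eval z).re ≤ 1} ∧
    IsConnected {z : ℂ | (P.eval z).im = 0 ∧ -1 ≤ (P.eval z).re ∧ (P.eval z).re ≤ 1}ᶜ := by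
  have hTeq : {z : ℂ | (P.eval z).im = 0 ∧ -1 ≤ (P.eval z).re ∧ (P.eval z).re ≤ 1}
      = P.eval ⁻¹' ShabatTree.seg := rfl
  rw [hTeq]
  refine ⟨?_, ?_, ?_⟩
  · -- compactness
    have hXeq : P.eval ⁻¹' ShabatTree.seg = ShabatTree.X P 0 := by
      ext z
      rw [Set.mem_preimage, ← ShabatTree.u_eq_zero_iff P]
      constructor
      · intro h; exact le_of_eq h
      · intro h; exact le_antisymm h (ShabatTree.u_nonneg P z)
    rw [hXeq]
    exact ShabatTree.isCompact_X P hP 0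
  · -- connectedness
    refine ⟨?_, ShabatTree.T_isPreconnected P hP hcrit⟩
    obtain ⟨z, hz⟩ := Complex.exists_root (Polynomial.natDegree_pos_iff_degree_pos.mp hP)
    exact ⟨z, by simp only [Set.mem_preimage, hz.eq_zero]; exact ShabatTree.zero_mem_seg⟩
  · -- complement connected
    exact ShabatTree.compl_isConnected P hP
end
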